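/- Let X be a finite closure space and W ⊆ X. Then W is open if and only if there exists A ⊆ X such that W = { x ∈ X | ∃ M ∈ 𝓜(x), M ⊆ A }. (Equivalently, W is open iff W = π([A]) for some A ⊆ X, where [A] = {(y,N) ∈ Top X | N ⊆ A} and π(y,N) = y.) -/

import Mathlib

/-- The set of neighborhoods of a point `x` in a closure space with closure operator `c`:
`U` is a neighborhood of `x` if `x ∉ c (X \ U)`. -/
def nbhd {X : Type*} (c : Set X → Set X) (x : X) : Set (Set X) := {U | x ∉ c Uᶜ}

/-- The set `𝓜(x)` of minimal neighborhoods of `x` (minimal elements of `nbhd c x`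
under inclusion). -/
def minNbhd {X : Type*} (c : Set X → Set X) (x : X) : Set (Set X) :=
  {M | M ∈ nbhd c x ∧ ∀ U ∈ nbhd c x, U ⊆ M → U = M}

/-- A subset `U` is open in the closure space if its complement is closed. -/
def isOpenCS {X : Type*} (c : Set X → Set X) (U : Set X) : Prop := c Uᶜ = Uᶜ

/-- `A` converges to `x` if `A` is contained in some minimal neighborhood of `x`. -/
def conv {X : Type*} (c : Set X → Set X) (A : Set X) (x : X) : Prop :=
  ∃ M ∈ minNbhd c x, A ⊆ M

/-! Minimal neighborhoods of a point are neighborhoods of each of their points, so the points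
admitting a minimal neighborhood inside `A` form an open set; conversely an open set is a
neighborhood of each of its points and, `X` being finite, contains a minimal one. -/

section ClosureSpace

variable {X : Type*} (c : Set X → Set X)

/-- The set `π([A])`. -/
def minNbhdInterior (A : Set X) : Set X := {x | ∃ M ∈ minNbhd c x, M ⊆ A}

variable {c}

lemma mem_of_mem_nbhd (hc1 : ∀ A : Set X, A ⊆ c A) {x : X} {U : Set X}
    (hU : U ∈ nbhd c x) : x ∈ U :=
  not_not.mp fun hx => hU (hc1 Uᶜ hx)

lemma nbhd_mono (hc2 : ∀ A B : Set X, A ⊆ B → c A ⊆ c B) {x : X} {U V : Set X}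
    (hU : U ∈ nbhd c x) (hUV : U ⊆ V) : V ∈ nbhd c x :=
  fun hx => hU (hc2 _ _ (Set.compl_subset_compl.mpr hUV) hx)

lemma isOpenCS_iff_forall_mem_nbhd (hc1 : ∀ A : Set X, A ⊆ c A) {W : Set X} :
    isOpenCS c W ↔ ∀ x ∈ W, W ∈ nbhd c x := by
  refine ⟨fun hW x hx hxc => (hW ▸ hxc) hx, fun hW => ?_⟩
  exact Set.Subset.antisymm (fun x hxc hx => hW x hx hxc) (hc1 Wᶜ)

lemma exists_minNbhd_subset [Finite X] {x : X} {U : Set X} (hU : U ∈ nbhd c x) :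
    ∃ M ∈ minNbhd c x, M ⊆ U := by
  obtain ⟨M, ⟨hM, hMU⟩, hmin⟩ :=
    Set.Finite.exists_minimalFor id {V | V ∈ nbhd c x ∧ V ⊆ U} (Set.toFinite _) ⟨U, hU, le_rfl⟩
  exact ⟨M, ⟨hM, fun V hV hVM => hVM.antisymm (hmin ⟨hV, hVM.trans hMU⟩ hVM)⟩, hMU⟩

/-- If `y ∈ M` but `M` were no neighborhood of `y`, then `y ∈ c Mᶜ`, so `M \ {y}` would
still be a neighborhood of `x`, contradicting minimality. -/
lemma mem_nbhd_of_mem_minNbhd (hc1 : ∀ A : Set X, A ⊆ c A)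
    (hc2 : ∀ A B : Set X, A ⊆ B → c A ⊆ c B) (hc3 : ∀ A : Set X, c (c A) = c A)
    {x y : X} {M : Set X} (hM : M ∈ minNbhd c x) (hy : y ∈ M) : M ∈ nbhd c y := by
  intro hyc
  have hsub : (M \ {y})ᶜ ⊆ c Mᶜ := by
    rw [Set.compl_sdiff]
    exact Set.union_subset (Set.singleton_subset_iff.mpr hyc) (hc1 Mᶜ)
  have hMy : M \ {y} ∈ nbhd c x := fun hx => hM.1 (hc3 Mᶜ ▸ hc2 _ _ hsub hx)
  have hMeq : M \ {y} = M := hM.2 _ hMy Set.sdiff_subset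
  exact ((Set.ext_iff.mp hMeq y).mpr hy).2 rfl

lemma isOpenCS_minNbhdInterior [Finite X] (hc1 : ∀ A : Set X, A ⊆ c A)
    (hc2 : ∀ A B : Set X, A ⊆ B → c A ⊆ c B) (hc3 : ∀ A : Set X, c (c A) = c A)
    (A : Set X) : isOpenCS c (minNbhdInterior c A) := by
  rw [isOpenCS_iff_forall_mem_nbhd hc1]
  rintro x ⟨M, hM, hMA⟩
  have hM_sub : M ⊆ minNbhdInterior c A := fun y hy =>
    have ⟨N, hN, hNM⟩ := exists_minNbhd_subset (mem_nbhd_of_mem_minNbhd hc1 hc2 hc3 hM hy)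
    ⟨N, hN, hNM.trans hMA⟩
  exact nbhd_mono hc2 hM.1 hM_sub

lemma minNbhdInterior_eq_self_of_isOpenCS [Finite X] (hc1 : ∀ A : Set X, A ⊆ c A)
    {W : Set X} (hW : isOpenCS c W) : minNbhdInterior c W = W := by
  refine Set.Subset.antisymm (fun x ⟨M, hM, hMW⟩ => hMW (mem_of_mem_nbhd hc1 hM.1)) ?_
  exact fun x hx => exists_minNbhd_subset ((isOpenCS_iff_forall_mem_nbhd hc1).mp hW x hx)

end ClosureSpace

/-- `W` is open iff it is of the form `{x | ∃ M ∈ 𝓜(x), M ⊆ A}` for some `A`. -/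
theorem stmt_13 {X : Type*} [Fintype X] (c : Set X → Set X)
    (hc1 : ∀ A : Set X, A ⊆ c A)
    (hc2 : ∀ A B : Set X, A ⊆ B → c A ⊆ c B)
    (hc3 : ∀ A : Set X, c (c A) = c A)
    (W : Set X) :
    isOpenCS c W ↔ ∃ A : Set X, W = {x : X | ∃ M ∈ minNbhd c x, M ⊆ A} := by
  constructor
  · exact fun hW => ⟨W, (minNbhdInterior_eq_self_of_isOpenCS hc1 hW).symm⟩
  · rintro ⟨A, rfl⟩
    exact isOpenCS_minNbhdInterior hc1 hc2 hc3 A
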